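/- Let n, k be integers with n ≥ 2k and k ≥ 1, and let i be an integer with 0 ≤ i < k. Then the chromatic number of G_i(n,k) is at most n − 2k + 2. -/

import Mathlib

/-- The involution on `ℕ` swapping `2j ↔ 2j+1` for `j < i`. -/
def sigmaNat (i : ℕ) (x : ℕ) : ℕ :=
  if x < 2 * i then (if x % 2 = 0 then x + 1 else x - 1) else x

lemma sigmaNat_invol (i : ℕ) : Function.Involutive (sigmaNat i) := by
  intro x; unfold sigmaNat; split_ifs <;> omega

/-- `sigmaNat` restricted to `Fin n` (the identity in the out-of-range degenerate case,
which never occurs when `2 * i ≤ n`). -/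
def sigmaFinFun (n i : ℕ) (x : Fin n) : Fin n :=
  if h : sigmaNat i x.val < n then ⟨sigmaNat i x.val, h⟩ else x

lemma sigmaFinFun_invol (n i : ℕ) : Function.Involutive (sigmaFinFun n i) := by
  intro x
  unfold sigmaFinFun
  by_cases h : sigmaNat i x.val < n
  · rw [dif_pos h]
    have h2 : sigmaNat i ((⟨sigmaNat i x.val, h⟩ : Fin n) : ℕ) < n := by
      show sigmaNat i (sigmaNat i x.val) < n
      rw [sigmaNat_invol]; exact x.isLt
    rw [dif_pos h2]
    ext
    exact sigmaNat_invol i x.val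
  · rw [dif_neg h, dif_neg h]

/-- The permutation `σ_i = (1 2)(3 4)⋯(2i-1 2i)` of `[n]`, in `0`-indexed form on `Fin n`:
it swaps `2j ↔ 2j+1` for `j < i` and fixes everything else (assuming `2 * i ≤ n`). -/
def sigmaPerm (n i : ℕ) : Equiv.Perm (Fin n) :=
  Function.Involutive.toPerm _ (sigmaFinFun_invol n i)

/-- The graph `G_i(n,k)`: vertices are the `k`-subsets of `[n]`, with `v` adjacent to `w`
iff `v ∩ σ_i(w) = ∅`. -/
def GGraph (n k i : ℕ) : SimpleGraph {s : Finset (Fin n) // s.card = k} where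
  Adj v w := v ≠ w ∧ Disjoint v.1 (w.1.image (sigmaPerm n i))
  symm := ⟨by
    rintro v w ⟨h1, h2⟩
    refine ⟨h1.symm, ?_⟩
    rw [Finset.disjoint_left] at h2 ⊢
    intro a haw hav
    rcases Finset.mem_image.mp hav with ⟨b, hbv, hba⟩
    refine h2 hbv (Finset.mem_image.mpr ⟨a, haw, ?_⟩)
    rw [← hba]
    exact (sigmaFinFun_invol n i) b⟩
  loopless := ⟨fun _ h => h.1 rfl⟩

/-! Let `W` be a set of fixed points of `σ`. Colour a `k`-set meeting `W` by one of its points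
in `W`: a fixed point `x ∈ v ∩ w` lies in `v ∩ σ(w)`. Give all `k`-sets avoiding `W` one
extra colour: for two of them, `v` and `σ(w)` both lie in `Wᶜ`, so they meet once
`|Wᶜ| < 2k`. For `σ_i` and `i < k`, the points `2i+1, …, n` are fixed, so `W` can have
`n - 2k + 1` points. -/

open Finset

section FixedPoints

variable {α : Type*} [Fintype α] [DecidableEq α] {σ : Equiv.Perm α} {W : Finset α}

theorem image_subset_compl_of_forall_mem_apply_eq (hσ : ∀ x ∈ W, σ x = x) {w : Finset α}
    (hw : w ⊆ Wᶜ) : w.image σ ⊆ Wᶜ := by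
  intro y hy
  obtain ⟨x, hx, rfl⟩ := mem_image.1 hy
  refine mem_compl.2 fun hσx => mem_compl.1 (hw hx) ?_
  rwa [← σ.injective (hσ _ hσx)]

theorem card_add_card_le_of_disjoint_image (hσ : ∀ x ∈ W, σ x = x) {v w : Finset α}
    (hv : v ⊆ Wᶜ) (hw : w ⊆ Wᶜ) (hvw : Disjoint v (w.image σ)) : #v + #w ≤ #Wᶜ :=
  calc #v + #w = #(v ∪ w.image σ) := by
        rw [card_union_of_disjoint hvw, card_image_of_injective _ σ.injective]
    _ ≤ #Wᶜ := card_le_card (union_subset hv (image_subset_compl_of_forall_mem_apply_eq hσ hw))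

theorem colorable_of_adj_imp_disjoint_image {k : ℕ} (hσ : ∀ x ∈ W, σ x = x) (hW : #Wᶜ < 2 * k)
    (G : SimpleGraph {s : Finset α // #s = k})
    (hG : ∀ v w, G.Adj v w → Disjoint v.1 (w.1.image σ)) : G.Colorable (#W + 1) := by
  have hcolor : ∀ v : {s : Finset α // #s = k}, ∃ o : Option W,
      (∀ x : W, o = some x → x.1 ∈ v.1) ∧ (o = none → v.1 ⊆ Wᶜ) := by
    intro v
    by_cases hv : Disjoint v.1 W
    · exact ⟨none, by simp, fun _ => le_compl_iff_disjoint_right.2 hv⟩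
    · obtain ⟨x, hxv, hxW⟩ := not_disjoint_iff.1 hv
      exact ⟨some ⟨x, hxW⟩, by rintro _ ⟨⟩; exact hxv, by simp⟩
  choose c hc_some hc_none using hcolor
  suffices hc : ∀ {v w}, G.Adj v w → c v ≠ c w by
    simpa using (SimpleGraph.Coloring.mk c hc).colorable
  intro v w hadj hcvw
  cases hv : c v with
  | some x =>
    refine disjoint_left.1 (hG v w hadj) (hc_some v x hv) (mem_image.2 ⟨x, ?_, hσ x x.2⟩)
    exact hc_some w x (hcvw ▸ hv)
  | none =>
    have := card_add_card_le_of_disjoint_image hσ (hc_none v hv) (hc_none w (hcvw ▸ hv))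
      (hG v w hadj)
    simp only [v.2, w.2] at this
    omega

end FixedPoints

theorem sigmaPerm_apply_of_le {n i : ℕ} {x : Fin n} (hx : 2 * i ≤ x) : sigmaPerm n i x = x := by
  have hfix : sigmaNat i x = x := by unfold sigmaNat; split_ifs <;> omega
  show sigmaFinFun n i x = x
  simp [sigmaFinFun, hfix]

theorem Fin.card_filter_le_val (n m : ℕ) : #{x : Fin n | m ≤ (x : ℕ)} = n - m := by
  have := card_filter_add_card_filter_not (s := (univ : Finset (Fin n)))
    fun x : Fin n => (x : ℕ) < m
  simp only [not_lt, card_univ, Fintype.card_fin, Fin.card_filter_val_lt] at this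
  omega

theorem chromaticNumber_GGraph_le_general (n k i : ℕ) (hn : 2 * k ≤ n)
    (hi : i < k) :
    (GGraph n k i).chromaticNumber ≤ ((n - 2 * k + 2 : ℕ) : ℕ∞) := by
  obtain ⟨W, hW, hWcard⟩ := exists_subset_card_eq (s := {x : Fin n | 2 * i ≤ (x : ℕ)})
    (n := n - 2 * k + 1) (by rw [Fin.card_filter_le_val]; omega)
  have hσ : ∀ x ∈ W, sigmaPerm n i x = x := fun x hx =>
    sigmaPerm_apply_of_le (mem_filter.1 (hW hx)).2
  have hWc : #Wᶜ < 2 * k := by rw [card_compl, Fintype.card_fin]; omega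
  have := colorable_of_adj_imp_disjoint_image hσ hWc (GGraph n k i) fun _ _ h => h.2
  rw [hWcard] at this
  exact this.chromaticNumber_le

/-- for `n ≥ 2k`, `k ≥ 1`, `0 ≤ i < k`, the chromatic number of `G_i(n,k)`
is at most `n - 2k + 2`. -/
theorem chromaticNumber_GGraph_le (n k i : ℕ) (hn : 2 * k ≤ n) (hk : 1 ≤ k)
    (hi : i < k) :
    (GGraph n k i).chromaticNumber ≤ ((n - 2 * k + 2 : ℕ) : ℕ∞) :=
  chromaticNumber_GGraph_le_general n k i hn hi
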